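/- arXiv:2411.00951 — 3 statements merged into one kernel-verified Lean document; each statement's English description precedes it below -/
import Mathlib

section
/- Every bipartite process tensor W satisfying the no-signaling-without-system-exchange conditions _{O_A}W = _{I_AO_A}W and _{O_B}W = _{I_BO_B}W also satisfies the four nonsignaling-preservation conditions: _{O_A(O'_AO'_BI'_AI'_B)}W = _{O_AI_A(O'_AO'_BI'_AI'_B)}W; _{O_B(O'_AO'_BI'_AI'_B)}W = _{O_BI_B(O'_AO'_BI'_AI'_B)}W; _{O_A(1−O'_A+O'_AI'_A−O'_BO'_AI'_A)}W = _{O_AI_A(1−O'_A+O'_AI'_A−O'_BO'_AI'_A)}W; and _{O_B(1−O'_B+O'_BI'_B−O'_AO'_BI'_B)}W = _{O_BI_B(1−O'_B+O'_BI'_B−O'_AO'_BI'_B)}W. -/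
open Finset
open scoped Classical

noncomputable section

namespace Boxworld

/-- A bipartite 8-wire tensor `W(i'_A, o_A, i'_B, o_B | i_A, o'_A, i_B, o'_B)`,
with output indices `IA' OA IB' OB` and input indices `IA OA' IB OB'`. -/
abbrev WTen (IA' OA IB' OB IA OA' IB OB' : Type) : Type :=
  IA' → OA → IB' → OB → IA → OA' → IB → OB' → ℝ

/-- A local-operation tensor `T(i, o' | i', o)`, argument order `(i', o, i, o')`. -/
abbrev OpTen (I' O I O' : Type) : Type := I' → O → I → O' → ℝ

section WireDefs

variable {IA' OA IB' OB IA OA' IB OB' : Type}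
variable [Fintype IA'] [Fintype OA] [Fintype IB'] [Fintype OB]
variable [Fintype IA] [Fintype OA'] [Fintype IB] [Fintype OB']

/-- Reduce-and-replace over the index `IA'`. -/
def rrIA' (W : WTen IA' OA IB' OB IA OA' IB OB') : WTen IA' OA IB' OB IA OA' IB OB' :=
  fun _ oa ib' ob ia oa' ib ob' => (∑ j, W j oa ib' ob ia oa' ib ob') / (Fintype.card IA' : ℝ)

/-- Reduce-and-replace over the index `OA`. -/
def rrOA (W : WTen IA' OA IB' OB IA OA' IB OB') : WTen IA' OA IB' OB IA OA' IB OB' :=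
  fun ia' _ ib' ob ia oa' ib ob' => (∑ j, W ia' j ib' ob ia oa' ib ob') / (Fintype.card OA : ℝ)

/-- Reduce-and-replace over the index `IB'`. -/
def rrIB' (W : WTen IA' OA IB' OB IA OA' IB OB') : WTen IA' OA IB' OB IA OA' IB OB' :=
  fun ia' oa _ ob ia oa' ib ob' => (∑ j, W ia' oa j ob ia oa' ib ob') / (Fintype.card IB' : ℝ)

/-- Reduce-and-replace over the index `OB`. -/
def rrOB (W : WTen IA' OA IB' OB IA OA' IB OB') : WTen IA' OA IB' OB IA OA' IB OB' :=
  fun ia' oa ib' _ ia oa' ib ob' => (∑ j, W ia' oa ib' j ia oa' ib ob') / (Fintype.card OB : ℝ)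

/-- Reduce-and-replace over the index `IA`. -/
def rrIA (W : WTen IA' OA IB' OB IA OA' IB OB') : WTen IA' OA IB' OB IA OA' IB OB' :=
  fun ia' oa ib' ob _ oa' ib ob' => (∑ j, W ia' oa ib' ob j oa' ib ob') / (Fintype.card IA : ℝ)

/-- Reduce-and-replace over the index `OA'`. -/
def rrOA' (W : WTen IA' OA IB' OB IA OA' IB OB') : WTen IA' OA IB' OB IA OA' IB OB' :=
  fun ia' oa ib' ob ia _ ib ob' => (∑ j, W ia' oa ib' ob ia j ib ob') / (Fintype.card OA' : ℝ)

/-- Reduce-and-replace over the index `IB`. -/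
def rrIB (W : WTen IA' OA IB' OB IA OA' IB OB') : WTen IA' OA IB' OB IA OA' IB OB' :=
  fun ia' oa ib' ob ia oa' _ ob' => (∑ j, W ia' oa ib' ob ia oa' j ob') / (Fintype.card IB : ℝ)

/-- Reduce-and-replace over the index `OB'`. -/
def rrOB' (W : WTen IA' OA IB' OB IA OA' IB OB') : WTen IA' OA IB' OB IA OA' IB OB' :=
  fun ia' oa ib' ob ia oa' ib _ => (∑ j, W ia' oa ib' ob ia oa' ib j) / (Fintype.card OB' : ℝ)

/-- Total reduction `r(W)`: the sum of all entries of `W`. -/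
def tot (W : WTen IA' OA IB' OB IA OA' IB OB') : ℝ :=
  ∑ ia', ∑ oa, ∑ ib', ∑ ob, ∑ ia, ∑ oa', ∑ ib, ∑ ob', W ia' oa ib' ob ia oa' ib ob'

/-- Elementwise nonnegativity `W ≥ 0`. -/
def Nonneg8 (W : WTen IA' OA IB' OB IA OA' IB OB') : Prop :=
  ∀ ia' oa ib' ob ia oa' ib ob', 0 ≤ W ia' oa ib' ob ia oa' ib ob'

/-- Reduce-and-replace over all of Alice's indices `𝔸 = I'_A I_A O_A O'_A`. -/
def rrA (W : WTen IA' OA IB' OB IA OA' IB OB') : WTen IA' OA IB' OB IA OA' IB OB' :=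
  rrIA' (rrIA (rrOA (rrOA' W)))

/-- Reduce-and-replace over all of Bob's indices `𝔹 = I'_B I_B O_B O'_B`. -/
def rrB (W : WTen IA' OA IB' OB IA OA' IB OB') : WTen IA' OA IB' OB IA OA' IB OB' :=
  rrIB' (rrIB (rrOB (rrOB' W)))

/-- The combination `_{(1 − O'_A + O_A O'_A − I_A O_A O'_A)}W`. -/
def LA (W : WTen IA' OA IB' OB IA OA' IB OB') : WTen IA' OA IB' OB IA OA' IB OB' :=
  W - rrOA' W + rrOA (rrOA' W) - rrIA (rrOA (rrOA' W))

/-- The combination `_{(1 − O'_B + O_B O'_B − I_B O_B O'_B)}W`. -/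
def LB (W : WTen IA' OA IB' OB IA OA' IB OB') : WTen IA' OA IB' OB IA OA' IB OB' :=
  W - rrOB' W + rrOB (rrOB' W) - rrIB (rrOB (rrOB' W))

/-- A bipartite process tensor. -/
def IsProcessTensor (W : WTen IA' OA IB' OB IA OA' IB OB') : Prop :=
  Nonneg8 W ∧
  tot W = (Fintype.card IA : ℝ) * (Fintype.card OA' : ℝ) *
      (Fintype.card IB : ℝ) * (Fintype.card OB' : ℝ) ∧
  rrA (LB W) = 0 ∧
  rrB (LA W) = 0 ∧
  LA (LB W) = 0

/-- Reduce-and-replace over all primed indices `O'_A O'_B I'_A I'_B`. -/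
def rrPrimes (W : WTen IA' OA IB' OB IA OA' IB OB') : WTen IA' OA IB' OB IA OA' IB OB' :=
  rrOA' (rrOB' (rrIA' (rrIB' W)))

/-- The combination `_{(1 − O'_A + O'_A I'_A − O'_B O'_A I'_A)}W`. -/
def MA (W : WTen IA' OA IB' OB IA OA' IB OB') : WTen IA' OA IB' OB IA OA' IB OB' :=
  W - rrOA' W + rrIA' (rrOA' W) - rrOB' (rrIA' (rrOA' W))

/-- The combination `_{(1 − O'_B + O'_B I'_B − O'_A O'_B I'_B)}W`. -/
def MB (W : WTen IA' OA IB' OB IA OA' IB OB') : WTen IA' OA IB' OB IA OA' IB OB' :=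
  W - rrOB' W + rrIB' (rrOB' W) - rrOA' (rrIB' (rrOB' W))

/-- The four nonsignaling-preservation (NSP) conditions. -/
def SatisfiesNSP (W : WTen IA' OA IB' OB IA OA' IB OB') : Prop :=
  rrOA (rrPrimes W) = rrIA (rrOA (rrPrimes W)) ∧
  rrOB (rrPrimes W) = rrIB (rrOB (rrPrimes W)) ∧
  rrOA (MA W) = rrIA (rrOA (MA W)) ∧
  rrOB (MB W) = rrIB (rrOB (MB W))

/-- A boxworld process. -/
def IsBoxworldProcess (W : WTen IA' OA IB' OB IA OA' IB OB') : Prop :=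
  Nonneg8 W ∧
  tot W = (Fintype.card IA : ℝ) * (Fintype.card OA' : ℝ) *
      (Fintype.card IB : ℝ) * (Fintype.card OB' : ℝ) ∧
  rrA W = rrOB' (rrA W) ∧
  rrB W = rrOA' (rrB W) ∧
  W = rrOA' W + rrOB' W - rrOA' (rrOB' W) ∧
  rrOA W = rrIA (rrOA W) ∧
  rrOB W = rrIB (rrOB W)

/-- The action `W * P` of a process tensor on a bipartite box
`P(o'_A, o'_B | i'_A, i'_B)`, contracting the indices `O'_A, O'_B, I'_A, I'_B`. -/
def actOnBox (W : WTen IA' OA IB' OB IA OA' IB OB')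
    (P : OA' → OB' → IA' → IB' → ℝ) : OA → OB → IA → IB → ℝ :=
  fun oa ob ia ib =>
    ∑ ia', ∑ ib', ∑ oa', ∑ ob', W ia' oa ib' ob ia oa' ib ob' * P oa' ob' ia' ib'

end WireDefs

section OpDefs

variable {I' O I O' : Type}
variable [Fintype I'] [Fintype O] [Fintype I] [Fintype O']

/-- Reduce-and-replace over the index `I'` of an operation tensor. -/
def rrOpI' (T : OpTen I' O I O') : OpTen I' O I O' :=
  fun _ o i o' => (∑ j, T j o i o') / (Fintype.card I' : ℝ)

/-- Reduce-and-replace over the index `O` of an operation tensor. -/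
def rrOpO (T : OpTen I' O I O') : OpTen I' O I O' :=
  fun i' _ i o' => (∑ j, T i' j i o') / (Fintype.card O : ℝ)

/-- Reduce-and-replace over the index `I` of an operation tensor. -/
def rrOpI (T : OpTen I' O I O') : OpTen I' O I O' :=
  fun i' o _ o' => (∑ j, T i' o j o') / (Fintype.card I : ℝ)

/-- Reduce-and-replace over the index `O'` of an operation tensor. -/
def rrOpO' (T : OpTen I' O I O') : OpTen I' O I O' :=
  fun i' o i _ => (∑ j, T i' o i j) / (Fintype.card O' : ℝ)

/-- Total reduction of an operation tensor. -/
def totOp (T : OpTen I' O I O') : ℝ := ∑ i', ∑ o, ∑ i, ∑ o', T i' o i o'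

/-- A deterministic local operation. -/
def IsDetOp (T : OpTen I' O I O') : Prop :=
  totOp T = (Fintype.card I' : ℝ) * (Fintype.card O : ℝ) ∧
  rrOpI (rrOpO' T) = rrOpI' (rrOpI (rrOpO (rrOpO' T))) ∧
  rrOpO' T = rrOpO (rrOpO' T)

/-- A set of probabilistic local operations `T^{a|x}(i, o' | i', o)`:
nonnegative tensors whose sum over the classical outcome `a` is, for each
classical input `x`, a deterministic local operation. -/
def IsLocalOps {A X : Type} [Fintype A] (T : A → X → OpTen I' O I O') : Prop :=
  (∀ a x i' o i o', 0 ≤ T a x i' o i o') ∧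
  ∀ x, IsDetOp (fun i' o i o' => ∑ a, T a x i' o i o')

/-- A nonsignaling set of probabilistic local operations: either the
deterministic operation `T^x` is independent of `x` (case 1), or it is a
convex combination of deterministic pre-processings `f_λ` (possibly depending
on `x`) and post-processings `g_λ` independent of both the box output and `x`
(case 2). -/
def IsNSLocalOps {A X : Type} [Fintype A] (T : A → X → OpTen I' O I O') : Prop :=
  IsLocalOps T ∧
  ((∀ x x' i' o i o', (∑ a, T a x i' o i o') = ∑ a, T a x' i' o i o') ∨
    ∃ (m : ℕ) (π : Fin m → ℝ) (f : Fin m → I' → X → I) (g : Fin m → I' → O'),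
      (∀ l, 0 ≤ π l) ∧ (∑ l, π l = 1) ∧
      ∀ x i' o i o', (∑ a, T a x i' o i o') =
        ∑ l, π l * ((if i = f l i' x then (1 : ℝ) else 0) *
          (if o' = g l i' then (1 : ℝ) else 0)))

end OpDefs

/-- A bipartite nonsignaling box `P(o_1, o_2 | i_1, i_2)`. -/
def IsNSBox {O1 O2 I1 I2 : Type} [Fintype O1] [Fintype O2]
    (P : O1 → O2 → I1 → I2 → ℝ) : Prop :=
  (∀ o1 o2 i1 i2, 0 ≤ P o1 o2 i1 i2) ∧
  (∀ i1 i2, ∑ o1, ∑ o2, P o1 o2 i1 i2 = 1) ∧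
  (∀ o1 i1 i2 i2', ∑ o2, P o1 o2 i1 i2 = ∑ o2, P o1 o2 i1 i2') ∧
  (∀ o2 i1 i1' i2, ∑ o1, P o1 o2 i1 i2 = ∑ o1, P o1 o2 i1' i2)

section Corr

variable {IA' OA IB' OB IA OA' IB OB' : Type}
variable [Fintype IA'] [Fintype OA] [Fintype IB'] [Fintype OB]
variable [Fintype IA] [Fintype OA'] [Fintype IB] [Fintype OB']
variable {A X B Y : Type}

/-- The correlations `(T^{A|X} ⊗ T^{B|Y}) * W` generated by local operations
acting on a process tensor: contraction over all eight wire indices. -/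
def corr (TA : A → X → OpTen IA' OA IA OA') (TB : B → Y → OpTen IB' OB IB OB')
    (W : WTen IA' OA IB' OB IA OA' IB OB') (a : A) (b : B) (x : X) (y : Y) : ℝ :=
  ∑ ia', ∑ oa, ∑ ib', ∑ ob, ∑ ia, ∑ oa', ∑ ib, ∑ ob',
    TA a x ia' oa ia oa' * TB b y ib' ob ib ob' * W ia' oa ib' ob ia oa' ib ob'

end Corr

set_option linter.unusedSectionVars false

section Aux

variable {IA' OA IB' OB IA OA' IB OB' : Type}
variable [Fintype IA'] [Fintype OA] [Fintype IB'] [Fintype OB]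
variable [Fintype IA] [Fintype OA'] [Fintype IB] [Fintype OB']
variable (W X Y : WTen IA' OA IB' OB IA OA' IB OB')

lemma comm_OA_OA' : rrOA (rrOA' W) = rrOA' (rrOA W) := by
  funext a b c d e f g h
  simp only [rrOA, rrOA', Finset.sum_div, div_div]
  rw [Finset.sum_comm, mul_comm]

lemma comm_OA_OB' : rrOA (rrOB' W) = rrOB' (rrOA W) := by
  funext a b c d e f g h
  simp only [rrOA, rrOB', Finset.sum_div, div_div]
  rw [Finset.sum_comm, mul_comm]

lemma comm_OA_IA' : rrOA (rrIA' W) = rrIA' (rrOA W) := by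
  funext a b c d e f g h
  simp only [rrOA, rrIA', Finset.sum_div, div_div]
  rw [Finset.sum_comm, mul_comm]

lemma comm_OA_IB' : rrOA (rrIB' W) = rrIB' (rrOA W) := by
  funext a b c d e f g h
  simp only [rrOA, rrIB', Finset.sum_div, div_div]
  rw [Finset.sum_comm, mul_comm]

lemma comm_IA_OA' : rrIA (rrOA' W) = rrOA' (rrIA W) := by
  funext a b c d e f g h
  simp only [rrIA, rrOA', Finset.sum_div, div_div]
  rw [Finset.sum_comm, mul_comm]

lemma comm_IA_OB' : rrIA (rrOB' W) = rrOB' (rrIA W) := by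
  funext a b c d e f g h
  simp only [rrIA, rrOB', Finset.sum_div, div_div]
  rw [Finset.sum_comm, mul_comm]

lemma comm_IA_IA' : rrIA (rrIA' W) = rrIA' (rrIA W) := by
  funext a b c d e f g h
  simp only [rrIA, rrIA', Finset.sum_div, div_div]
  rw [Finset.sum_comm, mul_comm]

lemma comm_IA_IB' : rrIA (rrIB' W) = rrIB' (rrIA W) := by
  funext a b c d e f g h
  simp only [rrIA, rrIB', Finset.sum_div, div_div]
  rw [Finset.sum_comm, mul_comm]

lemma comm_OB_OA' : rrOB (rrOA' W) = rrOA' (rrOB W) := by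
  funext a b c d e f g h
  simp only [rrOB, rrOA', Finset.sum_div, div_div]
  rw [Finset.sum_comm, mul_comm]

lemma comm_OB_OB' : rrOB (rrOB' W) = rrOB' (rrOB W) := by
  funext a b c d e f g h
  simp only [rrOB, rrOB', Finset.sum_div, div_div]
  rw [Finset.sum_comm, mul_comm]

lemma comm_OB_IA' : rrOB (rrIA' W) = rrIA' (rrOB W) := by
  funext a b c d e f g h
  simp only [rrOB, rrIA', Finset.sum_div, div_div]
  rw [Finset.sum_comm, mul_comm]

lemma comm_OB_IB' : rrOB (rrIB' W) = rrIB' (rrOB W) := by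
  funext a b c d e f g h
  simp only [rrOB, rrIB', Finset.sum_div, div_div]
  rw [Finset.sum_comm, mul_comm]

lemma comm_IB_OA' : rrIB (rrOA' W) = rrOA' (rrIB W) := by
  funext a b c d e f g h
  simp only [rrIB, rrOA', Finset.sum_div, div_div]
  rw [Finset.sum_comm, mul_comm]

lemma comm_IB_OB' : rrIB (rrOB' W) = rrOB' (rrIB W) := by
  funext a b c d e f g h
  simp only [rrIB, rrOB', Finset.sum_div, div_div]
  rw [Finset.sum_comm, mul_comm]

lemma comm_IB_IA' : rrIB (rrIA' W) = rrIA' (rrIB W) := by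
  funext a b c d e f g h
  simp only [rrIB, rrIA', Finset.sum_div, div_div]
  rw [Finset.sum_comm, mul_comm]

lemma comm_IB_IB' : rrIB (rrIB' W) = rrIB' (rrIB W) := by
  funext a b c d e f g h
  simp only [rrIB, rrIB', Finset.sum_div, div_div]
  rw [Finset.sum_comm, mul_comm]

lemma rrOA_add : rrOA (X + Y) = rrOA X + rrOA Y := by
  funext a b c d e f g h
  show (∑ j, (X a j c d e f g h + Y a j c d e f g h)) / _ = _
  rw [Finset.sum_add_distrib, add_div]
  rfl

lemma rrOA_sub : rrOA (X - Y) = rrOA X - rrOA Y := by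
  funext a b c d e f g h
  show (∑ j, (X a j c d e f g h - Y a j c d e f g h)) / _ = _
  rw [Finset.sum_sub_distrib, sub_div]
  rfl

lemma rrIA_add : rrIA (X + Y) = rrIA X + rrIA Y := by
  funext a b c d e f g h
  show (∑ j, (X a b c d j f g h + Y a b c d j f g h)) / _ = _
  rw [Finset.sum_add_distrib, add_div]
  rfl

lemma rrIA_sub : rrIA (X - Y) = rrIA X - rrIA Y := by
  funext a b c d e f g h
  show (∑ j, (X a b c d j f g h - Y a b c d j f g h)) / _ = _
  rw [Finset.sum_sub_distrib, sub_div]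
  rfl

lemma rrOB_add : rrOB (X + Y) = rrOB X + rrOB Y := by
  funext a b c d e f g h
  show (∑ j, (X a b c j e f g h + Y a b c j e f g h)) / _ = _
  rw [Finset.sum_add_distrib, add_div]
  rfl

lemma rrOB_sub : rrOB (X - Y) = rrOB X - rrOB Y := by
  funext a b c d e f g h
  show (∑ j, (X a b c j e f g h - Y a b c j e f g h)) / _ = _
  rw [Finset.sum_sub_distrib, sub_div]
  rfl

lemma rrIB_add : rrIB (X + Y) = rrIB X + rrIB Y := by
  funext a b c d e f g h
  show (∑ j, (X a b c d e f j h + Y a b c d e f j h)) / _ = _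
  rw [Finset.sum_add_distrib, add_div]
  rfl

lemma rrIB_sub : rrIB (X - Y) = rrIB X - rrIB Y := by
  funext a b c d e f g h
  show (∑ j, (X a b c d e f j h - Y a b c d e f j h)) / _ = _
  rw [Finset.sum_sub_distrib, sub_div]
  rfl

end Aux

theorem statement_7
    {IA' OA IB' OB IA OA' IB OB' : Type}
    [Fintype IA'] [Fintype OA] [Fintype IB'] [Fintype OB]
    [Fintype IA] [Fintype OA'] [Fintype IB] [Fintype OB']
    [Nonempty IA'] [Nonempty OA] [Nonempty IB'] [Nonempty OB]
    [Nonempty IA] [Nonempty OA'] [Nonempty IB] [Nonempty OB']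
    (W : WTen IA' OA IB' OB IA OA' IB OB') (hW : IsProcessTensor W)
    (h1 : rrOA W = rrIA (rrOA W)) (h2 : rrOB W = rrIB (rrOB W)) :
    SatisfiesNSP W := by
  refine ⟨?_, ?_, ?_, ?_⟩
  · simp only [rrPrimes, comm_OA_OA', comm_OA_OB', comm_OA_IA', comm_OA_IB',
      comm_IA_OA', comm_IA_OB', comm_IA_IA', comm_IA_IB']
    rw [← h1]
  · simp only [rrPrimes, comm_OB_OA', comm_OB_OB', comm_OB_IA', comm_OB_IB',
      comm_IB_OA', comm_IB_OB', comm_IB_IA', comm_IB_IB']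
    rw [← h2]
  · simp only [MA, rrOA_add, rrOA_sub, rrIA_add, rrIA_sub,
      comm_OA_OA', comm_OA_OB', comm_OA_IA', comm_OA_IB',
      comm_IA_OA', comm_IA_OB', comm_IA_IA', comm_IA_IB']
    rw [← h1]
  · simp only [MB, rrOB_add, rrOB_sub, rrIB_add, rrIB_sub,
      comm_OB_OA', comm_OB_OB', comm_OB_IA', comm_OB_IB',
      comm_IB_OA', comm_IB_OB', comm_IB_IA', comm_IB_IB']
    rw [← h2]


end Boxworld

end
end

section
/- Let W be a boxworld process. Then the following are equivalent: (i) for every choice of finite nonempty classical sets X, A, Y, B and every pair of sets of probabilistic local operations T^{A|X} on Alice's wires and T^{B|Y} on Bob's wires, the generated correlations P̄ = (T^{A|X} ⊗ T^{B|Y}) * W satisfy that Σ_b P̄(a, b | x, y) is independent of y (no signaling from Bob to Alice); (ii) W = _{O'_B}W. The analogous equivalence holds with the roles of Alice and Bob interchanged, with condition W = _{O'_A}W. -/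
/-
If `W` does not depend on `O'_B`, Bob's local operation `T^y` enters Alice's marginal only through
`∑_{o'} T^y`, which is independent of Bob's box output `o` and sums to one over Bob's box input;
together with the process axiom that `∑_{O_B} W` does not depend on `I_B`, this makes the marginal
independent of `y`. Conversely, Alice can read her box output and feed fixed inputs, while Bob feeds
his box output back as `o' = g(i', o)`; two choices of `g` that differ at a single point show that
no signalling forces `W` to be constant in `O'_B`. The statement for Alice follows by exchanging the
parties.
-/

open Finset
open scoped Classical

noncomputable section

namespace Boxworld

section Operations

variable {I' O I O' : Type}

def wiringOp (f : I' → I) (g : I' → O → O') : OpTen I' O I O' :=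
  fun i' o i o' => if i = f i' ∧ o' = g i' o then 1 else 0

def recordOp (i₀ : I) (o'₀ : O') : I' × O → Unit → OpTen I' O I O' :=
  fun p _ i' o i o' =>
    if (i', o) = p then wiringOp (fun _ => i₀) (fun _ _ => o'₀) i' o i o' else 0

variable [Fintype I'] [Fintype O] [Fintype I] [Fintype O']

def contract (T V : OpTen I' O I O') : ℝ :=
  ∑ i', ∑ o, ∑ i, ∑ o', T i' o i o' * V i' o i o'

theorem IsDetOp.sum_O'_eq [Nonempty O'] {T : OpTen I' O I O'} (hT : IsDetOp T)
    (i' : I') (o₁ o₂ : O) (i : I) : ∑ o', T i' o₁ i o' = ∑ o', T i' o₂ i o' := by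
  have h₁ := congrArg (fun F => F i' o₁ i (Classical.arbitrary O')) hT.2.2
  have h₂ := congrArg (fun F => F i' o₂ i (Classical.arbitrary O')) hT.2.2
  exact (div_left_inj' (Nat.cast_ne_zero.2 Fintype.card_ne_zero)).1 (h₁.trans h₂.symm)

theorem IsDetOp.sum_I_O'_eq_one [Nonempty I] [Nonempty O'] {T : OpTen I' O I O'}
    (hT : IsDetOp T) (i' : I') (o : O) : ∑ i, ∑ o', T i' o i o' = 1 := by
  have h := congrArg (fun F => F i' o (Classical.arbitrary I) (Classical.arbitrary O')) hT.2.1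
  have htot := hT.1
  simp only [rrOpI, rrOpI', rrOpO, rrOpO', ← Finset.sum_div] at h
  unfold totOp at htot
  simp only [Finset.sum_comm (γ := I)] at h htot
  rw [htot] at h
  have : Nonempty I' := ⟨i'⟩
  have : Nonempty O := ⟨o⟩
  field_simp at h
  rwa [Finset.sum_comm]

theorem IsDetOp.contract_eq_sum [Nonempty O] {T V : OpTen I' O I O'} (hT : IsDetOp T)
    (hO' : ∀ i' o i o'₁ o'₂, V i' o i o'₁ = V i' o i o'₂)
    (hI : ∀ i' i₁ i₂ o', ∑ o, V i' o i₁ o' = ∑ o, V i' o i₂ o') (i₀ : I) (o'₀ : O') :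
    contract T V = ∑ i', ∑ o, V i' o i₀ o'₀ := by
  have : Nonempty I := ⟨i₀⟩
  have : Nonempty O' := ⟨o'₀⟩
  set o₀ := Classical.arbitrary O
  refine Finset.sum_congr rfl fun i' _ => ?_
  calc ∑ o, ∑ i, ∑ o', T i' o i o' * V i' o i o'
      = ∑ i, ∑ o, (∑ o', T i' o₀ i o') * V i' o i o'₀ := by
        rw [Finset.sum_comm]
        simp only [hO' i' _ _ _ o'₀, ← Finset.sum_mul, hT.sum_O'_eq i' _ o₀]
    _ = (∑ i, ∑ o', T i' o₀ i o') * ∑ o, V i' o i₀ o'₀ := by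
        simp_rw [← Finset.mul_sum, hI i' _ i₀, ← Finset.sum_mul]
    _ = ∑ o, V i' o i₀ o'₀ := by rw [hT.sum_I_O'_eq_one, one_mul]

theorem IsDetOp.contract_eq [Nonempty O] [Nonempty I] [Nonempty O']
    {T₁ T₂ V : OpTen I' O I O'} (h₁ : IsDetOp T₁) (h₂ : IsDetOp T₂)
    (hO' : ∀ i' o i o'₁ o'₂, V i' o i o'₁ = V i' o i o'₂)
    (hI : ∀ i' i₁ i₂ o', ∑ o, V i' o i₁ o' = ∑ o, V i' o i₂ o') :
    contract T₁ V = contract T₂ V := by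
  obtain ⟨i₀⟩ := ‹Nonempty I›
  obtain ⟨o'₀⟩ := ‹Nonempty O'›
  rw [h₁.contract_eq_sum hO' hI i₀ o'₀, h₂.contract_eq_sum hO' hI i₀ o'₀]

theorem isDetOp_wiringOp (f : I' → I) (g : I' → O → O') : IsDetOp (wiringOp f g) := by
  have hsum : ∀ i' o i, ∑ o', wiringOp f g i' o i o' = if i = f i' then 1 else 0 := by
    intro i' o i
    simp [wiringOp, ite_and]
  refine ⟨?_, ?_, ?_⟩
  · simp [totOp, hsum]
  · funext i' o i o'
    have : Nonempty I' := ⟨i'⟩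
    have : Nonempty O := ⟨o⟩
    simp [rrOpI, rrOpI', rrOpO, rrOpO', ← Finset.sum_div, hsum]
  · funext i' o i o'
    have : Nonempty O := ⟨o⟩
    simp [rrOpO, rrOpO', hsum]

theorem isLocalOps_wiringOp :
    IsLocalOps (fun (_ : Unit) (fg : (I' → I) × (I' → O → O')) => wiringOp fg.1 fg.2) := by
  refine ⟨fun _ _ _ _ _ _ => ?_, fun fg => ?_⟩
  · simp only [wiringOp]; positivity
  · simpa using isDetOp_wiringOp fg.1 fg.2

theorem isLocalOps_recordOp (i₀ : I) (o'₀ : O') :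
    IsLocalOps (recordOp (I' := I') (O := O) i₀ o'₀) := by
  refine ⟨fun _ _ _ _ _ _ => ?_, fun _ => ?_⟩
  · simp only [recordOp, wiringOp]; positivity
  · simpa [recordOp] using isDetOp_wiringOp (fun (_ : I') => i₀) (fun (_ : I') (_ : O) => o'₀)

end Operations

section Processes

variable {IA' OA IB' OB IA OA' IB OB' : Type}

theorem eq_rrOB'_iff [Fintype OB'] (W : WTen IA' OA IB' OB IA OA' IB OB') :
    W = rrOB' W ↔ ∀ ia' oa ib' ob ia oa' ib ob'₁ ob'₂,
      W ia' oa ib' ob ia oa' ib ob'₁ = W ia' oa ib' ob ia oa' ib ob'₂ := by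
  refine ⟨fun h ia' oa ib' ob ia oa' ib ob'₁ ob'₂ => ?_, fun h => ?_⟩
  · rw [h]
    rfl
  · funext ia' oa ib' ob ia oa' ib ob'
    have : Nonempty OB' := ⟨ob'⟩
    simp [rrOB', h ia' oa ib' ob ia oa' ib _ ob']

theorem sum_OB_eq_of_rrOB_eq [Fintype OB] [Fintype IB] [Nonempty OB]
    {W : WTen IA' OA IB' OB IA OA' IB OB'} (h : rrOB W = rrIB (rrOB W))
    (ia' : IA') (oa : OA) (ib' : IB') (ia : IA) (oa' : OA') (ib₁ ib₂ : IB) (ob' : OB') :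
    ∑ ob, W ia' oa ib' ob ia oa' ib₁ ob' = ∑ ob, W ia' oa ib' ob ia oa' ib₂ ob' := by
  have h₁ := congrArg (fun F => F ia' oa ib' (Classical.arbitrary OB) ia oa' ib₁ ob') h
  have h₂ := congrArg (fun F => F ia' oa ib' (Classical.arbitrary OB) ia oa' ib₂ ob') h
  exact (div_left_inj' (Nat.cast_ne_zero.2 Fintype.card_ne_zero)).1 (h₁.trans h₂.symm)

def swapW (W : WTen IA' OA IB' OB IA OA' IB OB') : WTen IB' OB IA' OA IB OB' IA OA' :=
  fun ib' ob ia' oa ib ob' ia oa' => W ia' oa ib' ob ia oa' ib ob'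

theorem swapW_injective :
    Function.Injective (swapW : WTen IA' OA IB' OB IA OA' IB OB' → _) :=
  Function.LeftInverse.injective (g := swapW) fun _ => rfl

variable [Fintype IA'] [Fintype OA] [Fintype IB'] [Fintype OB]
variable [Fintype IA] [Fintype OA'] [Fintype IB] [Fintype OB']

theorem corr_recordOp_wiringOp (W : WTen IA' OA IB' OB IA OA' IB OB') (ia₀ : IA) (oa'₀ : OA')
    (ia' : IA') (oa : OA) (f : IB' → IB) (g : IB' → OB → OB') :
    corr (recordOp ia₀ oa'₀) (fun _ fg => wiringOp fg.1 fg.2) W (ia', oa) () () (f, g) =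
      ∑ ib', ∑ ob, W ia' oa ib' ob ia₀ oa'₀ (f ib') (g ib' ob) := by
  simp [corr, recordOp, wiringOp, ite_and]

theorem sum_corr_eq_sum_contract {A X B Y : Type} [Fintype B] (TA : A → X → OpTen IA' OA IA OA')
    (TB : B → Y → OpTen IB' OB IB OB') (W : WTen IA' OA IB' OB IA OA' IB OB')
    (a : A) (x : X) (y : Y) :
    ∑ b, corr TA TB W a b x y = ∑ ia', ∑ oa, ∑ ia, ∑ oa', TA a x ia' oa ia oa' *
      contract (fun ib' ob ib ob' => ∑ b, TB b y ib' ob ib ob')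
        (fun ib' ob ib ob' => W ia' oa ib' ob ia oa' ib ob') := by
  simp only [corr, contract, Finset.mul_sum, Finset.sum_mul, mul_assoc]
  simp only [Finset.sum_comm (γ := B)]
  simp only [Finset.sum_comm (γ := IB')]
  simp only [Finset.sum_comm (γ := OB)]

theorem corr_swapW {A X B Y : Type} (TA : A → X → OpTen IB' OB IB OB')
    (TB : B → Y → OpTen IA' OA IA OA') (W : WTen IA' OA IB' OB IA OA' IB OB')
    (a : A) (b : B) (x : X) (y : Y) :
    corr TA TB (swapW W) a b x y = corr TB TA W b a y x := by
  simp only [corr, swapW, mul_comm (TA a x _ _ _ _)]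
  simp only [Finset.sum_comm (γ := IA')]
  simp only [Finset.sum_comm (γ := OA)]
  simp only [Finset.sum_comm (γ := IA)]
  simp only [Finset.sum_comm (γ := OA')]

def NoSignalingBtoA (W : WTen IA' OA IB' OB IA OA' IB OB') : Prop :=
  ∀ (X A Y B : Type) [Fintype X] [Nonempty X] [Fintype A] [Nonempty A]
    [Fintype Y] [Nonempty Y] [Fintype B] [Nonempty B]
    (TA : A → X → OpTen IA' OA IA OA') (TB : B → Y → OpTen IB' OB IB OB'),
    IsLocalOps TA → IsLocalOps TB →
    ∀ a x y y', ∑ b, corr TA TB W a b x y = ∑ b, corr TA TB W a b x y'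

def NoSignalingAtoB (W : WTen IA' OA IB' OB IA OA' IB OB') : Prop :=
  ∀ (X A Y B : Type) [Fintype X] [Nonempty X] [Fintype A] [Nonempty A]
    [Fintype Y] [Nonempty Y] [Fintype B] [Nonempty B]
    (TA : A → X → OpTen IA' OA IA OA') (TB : B → Y → OpTen IB' OB IB OB'),
    IsLocalOps TA → IsLocalOps TB →
    ∀ b y x x', ∑ a, corr TA TB W a b x y = ∑ a, corr TA TB W a b x' y

theorem noSignalingAtoB_iff_swapW (W : WTen IA' OA IB' OB IA OA' IB OB') :
    NoSignalingAtoB W ↔ NoSignalingBtoA (swapW W) := by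
  refine ⟨fun h X A Y B _ _ _ _ _ _ _ _ TA TB hTA hTB a x y y' => ?_,
    fun h X A Y B _ _ _ _ _ _ _ _ TA TB hTA hTB b y x x' => ?_⟩
  · simpa only [corr_swapW] using h Y B X A TB TA hTB hTA a x y y'
  · simpa only [corr_swapW] using h Y B X A TB TA hTB hTA b y x x'

theorem eq_rrOB'_of_noSignalingBtoA {W : WTen IA' OA IB' OB IA OA' IB OB'}
    (hW : NoSignalingBtoA W) : W = rrOB' W := by
  refine (eq_rrOB'_iff W).2 fun ia' oa ib' ob ia oa' ib ob'₁ ob'₂ => ?_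
  have : Nonempty (IA' × OA) := ⟨(ia', oa)⟩
  have : Nonempty ((IB' → IB) × (IB' → OB → OB')) := ⟨(fun _ => ib, fun _ _ => ob'₁)⟩
  have h := hW Unit (IA' × OA) ((IB' → IB) × (IB' → OB → OB')) Unit
    (recordOp ia oa') (fun _ fg => wiringOp fg.1 fg.2) (isLocalOps_recordOp ia oa')
    isLocalOps_wiringOp (ia', oa) ()
    (fun _ => ib, fun u v => if u = ib' ∧ v = ob then ob'₁ else ob'₂) (fun _ => ib, fun _ _ => ob'₂)
  simp only [Fintype.sum_unique] at h
  rw [corr_recordOp_wiringOp, corr_recordOp_wiringOp] at h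
  have key : ∀ u v, W ia' oa u v ia oa' ib (if u = ib' ∧ v = ob then ob'₁ else ob'₂) =
      W ia' oa u v ia oa' ib ob'₂ + if u = ib' ∧ v = ob then
        W ia' oa ib' ob ia oa' ib ob'₁ - W ia' oa ib' ob ia oa' ib ob'₂ else 0 := by
    intro u v
    split_ifs with huv
    · obtain ⟨rfl, rfl⟩ := huv
      ring
    · ring
  simp only [key, Finset.sum_add_distrib] at h
  simpa [ite_and, sub_eq_zero] using h

theorem noSignalingBtoA_iff_eq_rrOB' [Nonempty IB] [Nonempty OB] [Nonempty OB']
    (W : WTen IA' OA IB' OB IA OA' IB OB') (h : rrOB W = rrIB (rrOB W)) :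
    NoSignalingBtoA W ↔ W = rrOB' W := by
  refine ⟨eq_rrOB'_of_noSignalingBtoA, fun hW X A Y B _ _ _ _ _ _ _ _ TA TB _ hTB a x y y' => ?_⟩
  have hC : ∀ ia' oa ia oa',
      contract (fun ib' ob ib ob' => ∑ b, TB b y ib' ob ib ob')
          (fun ib' ob ib ob' => W ia' oa ib' ob ia oa' ib ob') =
        contract (fun ib' ob ib ob' => ∑ b, TB b y' ib' ob ib ob')
          (fun ib' ob ib ob' => W ia' oa ib' ob ia oa' ib ob') :=
    fun ia' oa ia oa' => (hTB.2 y).contract_eq (hTB.2 y')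
      (fun ib' ob ib => (eq_rrOB'_iff W).1 hW ia' oa ib' ob ia oa' ib)
      (fun ib' => sum_OB_eq_of_rrOB_eq h ia' oa ib' ia oa')
  simp only [sum_corr_eq_sum_contract, hC]

end Processes

theorem statement_8_general
    {IA' OA IB' OB IA OA' IB OB' : Type}
    [Fintype IA'] [Fintype OA] [Fintype IB'] [Fintype OB]
    [Fintype IA] [Fintype OA'] [Fintype IB] [Fintype OB']
    [Nonempty OA] [Nonempty OB]
    [Nonempty IA] [Nonempty OA'] [Nonempty IB] [Nonempty OB']
    (W : WTen IA' OA IB' OB IA OA' IB OB') (hW : IsBoxworldProcess W) :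
    ((∀ (X A Y B : Type) [Fintype X] [Nonempty X] [Fintype A] [Nonempty A]
        [Fintype Y] [Nonempty Y] [Fintype B] [Nonempty B]
        (TA : A → X → OpTen IA' OA IA OA') (TB : B → Y → OpTen IB' OB IB OB'),
        IsLocalOps TA → IsLocalOps TB →
        ∀ a x y y', ∑ b, corr TA TB W a b x y = ∑ b, corr TA TB W a b x y') ↔
      W = rrOB' W) ∧
    ((∀ (X A Y B : Type) [Fintype X] [Nonempty X] [Fintype A] [Nonempty A]
        [Fintype Y] [Nonempty Y] [Fintype B] [Nonempty B]
        (TA : A → X → OpTen IA' OA IA OA') (TB : B → Y → OpTen IB' OB IB OB'),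
        IsLocalOps TA → IsLocalOps TB →
        ∀ b y x x', ∑ a, corr TA TB W a b x y = ∑ a, corr TA TB W a b x' y) ↔
      W = rrOA' W) := by
  obtain ⟨-, -, -, -, -, hA, hB⟩ := hW
  refine ⟨noSignalingBtoA_iff_eq_rrOB' W hB, ?_⟩
  calc NoSignalingAtoB W ↔ NoSignalingBtoA (swapW W) := noSignalingAtoB_iff_swapW W
    _ ↔ swapW W = swapW (rrOA' W) := noSignalingBtoA_iff_eq_rrOB' (swapW W) (congrArg swapW hA)
    _ ↔ W = rrOA' W := swapW_injective.eq_iff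

theorem statement_8
    {IA' OA IB' OB IA OA' IB OB' : Type}
    [Fintype IA'] [Fintype OA] [Fintype IB'] [Fintype OB]
    [Fintype IA] [Fintype OA'] [Fintype IB] [Fintype OB']
    [Nonempty IA'] [Nonempty OA] [Nonempty IB'] [Nonempty OB]
    [Nonempty IA] [Nonempty OA'] [Nonempty IB] [Nonempty OB']
    (W : WTen IA' OA IB' OB IA OA' IB OB') (hW : IsBoxworldProcess W) :
    ((∀ (X A Y B : Type) [Fintype X] [Nonempty X] [Fintype A] [Nonempty A]
        [Fintype Y] [Nonempty Y] [Fintype B] [Nonempty B]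
        (TA : A → X → OpTen IA' OA IA OA') (TB : B → Y → OpTen IB' OB IB OB'),
        IsLocalOps TA → IsLocalOps TB →
        ∀ a x y y', ∑ b, corr TA TB W a b x y = ∑ b, corr TA TB W a b x y') ↔
      W = rrOB' W) ∧
    ((∀ (X A Y B : Type) [Fintype X] [Nonempty X] [Fintype A] [Nonempty A]
        [Fintype Y] [Nonempty Y] [Fintype B] [Nonempty B]
        (TA : A → X → OpTen IA' OA IA OA') (TB : B → Y → OpTen IB' OB IB OB'),
        IsLocalOps TA → IsLocalOps TB →
        ∀ b y x x', ∑ a, corr TA TB W a b x y = ∑ a, corr TA TB W a b x' y) ↔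
      W = rrOA' W) :=
  statement_8_general W hW

end Boxworld

end
end

section
/- Let W be a boxworld process and let d := d_{O'_B} ≥ 2 be the cardinality of the index O'_B. Define W1 := ((d−1)·(_{O'_AO'_B}W) + (_{O'_B}W))/d and W2 := (d·(_{O'_AO'_B}W) − (_{O'_A}W))/(d−1). Then W1 is a boxworld process causally ordered from Alice to Bob (i.e. a boxworld process with W1 = _{O'_B}W1), W2 is a boxworld process causally ordered from Bob to Alice (i.e. a boxworld process with W2 = _{O'_A}W2), and W = d·W1 + (1−d)·W2. -/
open Finset
open scoped Classical

noncomputable section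

namespace Boxworld

set_option linter.unusedSectionVars false

section Helper

lemma sum3_swap {α β γ : Type*} [Fintype α] [Fintype β] [Fintype γ] (f : α → β → γ → ℝ) :
    ∑ a, ∑ b, ∑ c, f a b c = ∑ b, ∑ c, ∑ a, f a b c := by
  rw [Finset.sum_comm]
  exact Finset.sum_congr rfl fun b _ => Finset.sum_comm

end Helper

section Lemmas

variable {IA' OA IB' OB IA OA' IB OB' : Type}
variable [Fintype IA'] [Fintype OA] [Fintype IB'] [Fintype OB]
variable [Fintype IA] [Fintype OA'] [Fintype IB] [Fintype OB']
variable [Nonempty IA'] [Nonempty OA] [Nonempty IB'] [Nonempty OB]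
variable [Nonempty IA] [Nonempty OA'] [Nonempty IB] [Nonempty OB']

/-! Pointwise application lemmas for the `Pi` algebraic operations. -/

lemma wadd_apply (U V : WTen IA' OA IB' OB IA OA' IB OB')
    (x1 : IA') (x2 : OA) (x3 : IB') (x4 : OB) (x5 : IA) (x6 : OA') (x7 : IB) (x8 : OB') :
    (U + V) x1 x2 x3 x4 x5 x6 x7 x8 = U x1 x2 x3 x4 x5 x6 x7 x8 + V x1 x2 x3 x4 x5 x6 x7 x8 := rfl

lemma wsub_apply (U V : WTen IA' OA IB' OB IA OA' IB OB')
    (x1 : IA') (x2 : OA) (x3 : IB') (x4 : OB) (x5 : IA) (x6 : OA') (x7 : IB) (x8 : OB') :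
    (U - V) x1 x2 x3 x4 x5 x6 x7 x8 = U x1 x2 x3 x4 x5 x6 x7 x8 - V x1 x2 x3 x4 x5 x6 x7 x8 := rfl

lemma wsmul_apply (c : ℝ) (U : WTen IA' OA IB' OB IA OA' IB OB')
    (x1 : IA') (x2 : OA) (x3 : IB') (x4 : OB) (x5 : IA) (x6 : OA') (x7 : IB) (x8 : OB') :
    (c • U) x1 x2 x3 x4 x5 x6 x7 x8 = c * U x1 x2 x3 x4 x5 x6 x7 x8 := rfl

/-! Commutation lemmas. -/

lemma comm_OA'_OB' (W : WTen IA' OA IB' OB IA OA' IB OB') :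
    rrOA' (rrOB' W) = rrOB' (rrOA' W) := by
  funext x1 x2 x3 x4 x5 x6 x7 x8
  simp only [rrOA', rrOB', ← Finset.sum_div, div_div]
  rw [Finset.sum_comm, mul_comm]

lemma comm_OA_OB'_s9 (W : WTen IA' OA IB' OB IA OA' IB OB') :
    rrOA (rrOB' W) = rrOB' (rrOA W) := by
  funext x1 x2 x3 x4 x5 x6 x7 x8
  simp only [rrOA, rrOB', ← Finset.sum_div, div_div]
  rw [Finset.sum_comm, mul_comm]

lemma comm_IA_OB'_s9 (W : WTen IA' OA IB' OB IA OA' IB OB') :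
    rrIA (rrOB' W) = rrOB' (rrIA W) := by
  funext x1 x2 x3 x4 x5 x6 x7 x8
  simp only [rrIA, rrOB', ← Finset.sum_div, div_div]
  rw [Finset.sum_comm, mul_comm]

lemma comm_IA'_OB' (W : WTen IA' OA IB' OB IA OA' IB OB') :
    rrIA' (rrOB' W) = rrOB' (rrIA' W) := by
  funext x1 x2 x3 x4 x5 x6 x7 x8
  simp only [rrIA', rrOB', ← Finset.sum_div, div_div]
  rw [Finset.sum_comm, mul_comm]

lemma comm_OB_OA'_s9 (W : WTen IA' OA IB' OB IA OA' IB OB') :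
    rrOB (rrOA' W) = rrOA' (rrOB W) := by
  funext x1 x2 x3 x4 x5 x6 x7 x8
  simp only [rrOB, rrOA', ← Finset.sum_div, div_div]
  rw [Finset.sum_comm, mul_comm]

lemma comm_IB_OA'_s9 (W : WTen IA' OA IB' OB IA OA' IB OB') :
    rrIB (rrOA' W) = rrOA' (rrIB W) := by
  funext x1 x2 x3 x4 x5 x6 x7 x8
  simp only [rrIB, rrOA', ← Finset.sum_div, div_div]
  rw [Finset.sum_comm, mul_comm]

lemma comm_IB'_OA' (W : WTen IA' OA IB' OB IA OA' IB OB') :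
    rrIB' (rrOA' W) = rrOA' (rrIB' W) := by
  funext x1 x2 x3 x4 x5 x6 x7 x8
  simp only [rrIB', rrOA', ← Finset.sum_div, div_div]
  rw [Finset.sum_comm, mul_comm]

lemma comm_OA_OA'_s9 (W : WTen IA' OA IB' OB IA OA' IB OB') :
    rrOA (rrOA' W) = rrOA' (rrOA W) := by
  funext x1 x2 x3 x4 x5 x6 x7 x8
  simp only [rrOA, rrOA', ← Finset.sum_div, div_div]
  rw [Finset.sum_comm, mul_comm]

lemma comm_IA_OA'_s9 (W : WTen IA' OA IB' OB IA OA' IB OB') :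
    rrIA (rrOA' W) = rrOA' (rrIA W) := by
  funext x1 x2 x3 x4 x5 x6 x7 x8
  simp only [rrIA, rrOA', ← Finset.sum_div, div_div]
  rw [Finset.sum_comm, mul_comm]

lemma comm_OB_OB'_s9 (W : WTen IA' OA IB' OB IA OA' IB OB') :
    rrOB (rrOB' W) = rrOB' (rrOB W) := by
  funext x1 x2 x3 x4 x5 x6 x7 x8
  simp only [rrOB, rrOB', ← Finset.sum_div, div_div]
  rw [Finset.sum_comm, mul_comm]

lemma comm_IB_OB'_s9 (W : WTen IA' OA IB' OB IA OA' IB OB') :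
    rrIB (rrOB' W) = rrOB' (rrIB W) := by
  funext x1 x2 x3 x4 x5 x6 x7 x8
  simp only [rrIB, rrOB', ← Finset.sum_div, div_div]
  rw [Finset.sum_comm, mul_comm]

/-! Idempotence. -/

lemma idem_OA' (W : WTen IA' OA IB' OB IA OA' IB OB') :
    rrOA' (rrOA' W) = rrOA' W := by
  have hc : (Fintype.card OA' : ℝ) ≠ 0 := Nat.cast_ne_zero.mpr Fintype.card_ne_zero
  funext x1 x2 x3 x4 x5 x6 x7 x8
  simp only [rrOA', Finset.sum_const, Finset.card_univ, nsmul_eq_mul]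
  field_simp

lemma idem_OB' (W : WTen IA' OA IB' OB IA OA' IB OB') :
    rrOB' (rrOB' W) = rrOB' W := by
  have hc : (Fintype.card OB' : ℝ) ≠ 0 := Nat.cast_ne_zero.mpr Fintype.card_ne_zero
  funext x1 x2 x3 x4 x5 x6 x7 x8
  simp only [rrOB', Finset.sum_const, Finset.card_univ, nsmul_eq_mul]
  field_simp

/-! Linearity. -/

lemma rrIA'_add (U V : WTen IA' OA IB' OB IA OA' IB OB') :
    rrIA' (U + V) = rrIA' U + rrIA' V := by
  funext x1 x2 x3 x4 x5 x6 x7 x8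
  simp only [rrIA', wadd_apply, Finset.sum_add_distrib, add_div]

lemma rrIA'_sub (U V : WTen IA' OA IB' OB IA OA' IB OB') :
    rrIA' (U - V) = rrIA' U - rrIA' V := by
  funext x1 x2 x3 x4 x5 x6 x7 x8
  simp only [rrIA', wsub_apply, Finset.sum_sub_distrib, sub_div]

lemma rrIA'_smul (c : ℝ) (U : WTen IA' OA IB' OB IA OA' IB OB') :
    rrIA' (c • U) = c • rrIA' U := by
  funext x1 x2 x3 x4 x5 x6 x7 x8
  simp only [rrIA', wsmul_apply, ← Finset.mul_sum, mul_div_assoc]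

lemma rrOA_add_s9 (U V : WTen IA' OA IB' OB IA OA' IB OB') :
    rrOA (U + V) = rrOA U + rrOA V := by
  funext x1 x2 x3 x4 x5 x6 x7 x8
  simp only [rrOA, wadd_apply, Finset.sum_add_distrib, add_div]

lemma rrOA_sub_s9 (U V : WTen IA' OA IB' OB IA OA' IB OB') :
    rrOA (U - V) = rrOA U - rrOA V := by
  funext x1 x2 x3 x4 x5 x6 x7 x8
  simp only [rrOA, wsub_apply, Finset.sum_sub_distrib, sub_div]

lemma rrOA_smul (c : ℝ) (U : WTen IA' OA IB' OB IA OA' IB OB') :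
    rrOA (c • U) = c • rrOA U := by
  funext x1 x2 x3 x4 x5 x6 x7 x8
  simp only [rrOA, wsmul_apply, ← Finset.mul_sum, mul_div_assoc]

lemma rrIB'_add (U V : WTen IA' OA IB' OB IA OA' IB OB') :
    rrIB' (U + V) = rrIB' U + rrIB' V := by
  funext x1 x2 x3 x4 x5 x6 x7 x8
  simp only [rrIB', wadd_apply, Finset.sum_add_distrib, add_div]

lemma rrIB'_sub (U V : WTen IA' OA IB' OB IA OA' IB OB') :
    rrIB' (U - V) = rrIB' U - rrIB' V := by
  funext x1 x2 x3 x4 x5 x6 x7 x8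
  simp only [rrIB', wsub_apply, Finset.sum_sub_distrib, sub_div]

lemma rrIB'_smul (c : ℝ) (U : WTen IA' OA IB' OB IA OA' IB OB') :
    rrIB' (c • U) = c • rrIB' U := by
  funext x1 x2 x3 x4 x5 x6 x7 x8
  simp only [rrIB', wsmul_apply, ← Finset.mul_sum, mul_div_assoc]

lemma rrOB_add_s9 (U V : WTen IA' OA IB' OB IA OA' IB OB') :
    rrOB (U + V) = rrOB U + rrOB V := by
  funext x1 x2 x3 x4 x5 x6 x7 x8
  simp only [rrOB, wadd_apply, Finset.sum_add_distrib, add_div]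

lemma rrOB_sub_s9 (U V : WTen IA' OA IB' OB IA OA' IB OB') :
    rrOB (U - V) = rrOB U - rrOB V := by
  funext x1 x2 x3 x4 x5 x6 x7 x8
  simp only [rrOB, wsub_apply, Finset.sum_sub_distrib, sub_div]

lemma rrOB_smul (c : ℝ) (U : WTen IA' OA IB' OB IA OA' IB OB') :
    rrOB (c • U) = c • rrOB U := by
  funext x1 x2 x3 x4 x5 x6 x7 x8
  simp only [rrOB, wsmul_apply, ← Finset.mul_sum, mul_div_assoc]

lemma rrIA_add_s9 (U V : WTen IA' OA IB' OB IA OA' IB OB') :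
    rrIA (U + V) = rrIA U + rrIA V := by
  funext x1 x2 x3 x4 x5 x6 x7 x8
  simp only [rrIA, wadd_apply, Finset.sum_add_distrib, add_div]

lemma rrIA_sub_s9 (U V : WTen IA' OA IB' OB IA OA' IB OB') :
    rrIA (U - V) = rrIA U - rrIA V := by
  funext x1 x2 x3 x4 x5 x6 x7 x8
  simp only [rrIA, wsub_apply, Finset.sum_sub_distrib, sub_div]

lemma rrIA_smul (c : ℝ) (U : WTen IA' OA IB' OB IA OA' IB OB') :
    rrIA (c • U) = c • rrIA U := by
  funext x1 x2 x3 x4 x5 x6 x7 x8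
  simp only [rrIA, wsmul_apply, ← Finset.mul_sum, mul_div_assoc]

lemma rrOA'_add (U V : WTen IA' OA IB' OB IA OA' IB OB') :
    rrOA' (U + V) = rrOA' U + rrOA' V := by
  funext x1 x2 x3 x4 x5 x6 x7 x8
  simp only [rrOA', wadd_apply, Finset.sum_add_distrib, add_div]

lemma rrOA'_sub (U V : WTen IA' OA IB' OB IA OA' IB OB') :
    rrOA' (U - V) = rrOA' U - rrOA' V := by
  funext x1 x2 x3 x4 x5 x6 x7 x8
  simp only [rrOA', wsub_apply, Finset.sum_sub_distrib, sub_div]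

lemma rrOA'_smul (c : ℝ) (U : WTen IA' OA IB' OB IA OA' IB OB') :
    rrOA' (c • U) = c • rrOA' U := by
  funext x1 x2 x3 x4 x5 x6 x7 x8
  simp only [rrOA', wsmul_apply, ← Finset.mul_sum, mul_div_assoc]

lemma rrIB_add_s9 (U V : WTen IA' OA IB' OB IA OA' IB OB') :
    rrIB (U + V) = rrIB U + rrIB V := by
  funext x1 x2 x3 x4 x5 x6 x7 x8
  simp only [rrIB, wadd_apply, Finset.sum_add_distrib, add_div]

lemma rrIB_sub_s9 (U V : WTen IA' OA IB' OB IA OA' IB OB') :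
    rrIB (U - V) = rrIB U - rrIB V := by
  funext x1 x2 x3 x4 x5 x6 x7 x8
  simp only [rrIB, wsub_apply, Finset.sum_sub_distrib, sub_div]

lemma rrIB_smul (c : ℝ) (U : WTen IA' OA IB' OB IA OA' IB OB') :
    rrIB (c • U) = c • rrIB U := by
  funext x1 x2 x3 x4 x5 x6 x7 x8
  simp only [rrIB, wsmul_apply, ← Finset.mul_sum, mul_div_assoc]

lemma rrOB'_add (U V : WTen IA' OA IB' OB IA OA' IB OB') :
    rrOB' (U + V) = rrOB' U + rrOB' V := by
  funext x1 x2 x3 x4 x5 x6 x7 x8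
  simp only [rrOB', wadd_apply, Finset.sum_add_distrib, add_div]

lemma rrOB'_sub (U V : WTen IA' OA IB' OB IA OA' IB OB') :
    rrOB' (U - V) = rrOB' U - rrOB' V := by
  funext x1 x2 x3 x4 x5 x6 x7 x8
  simp only [rrOB', wsub_apply, Finset.sum_sub_distrib, sub_div]

lemma rrOB'_smul (c : ℝ) (U : WTen IA' OA IB' OB IA OA' IB OB') :
    rrOB' (c • U) = c • rrOB' U := by
  funext x1 x2 x3 x4 x5 x6 x7 x8
  simp only [rrOB', wsmul_apply, ← Finset.mul_sum, mul_div_assoc]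

/-! Linearity of `rrA`, `rrB`. -/

lemma rrA_add (U V : WTen IA' OA IB' OB IA OA' IB OB') :
    rrA (U + V) = rrA U + rrA V := by
  simp only [rrA, rrOA'_add, rrOA_add_s9, rrIA_add_s9, rrIA'_add]

lemma rrA_sub (U V : WTen IA' OA IB' OB IA OA' IB OB') :
    rrA (U - V) = rrA U - rrA V := by
  simp only [rrA, rrOA'_sub, rrOA_sub_s9, rrIA_sub_s9, rrIA'_sub]

lemma rrA_smul (c : ℝ) (U : WTen IA' OA IB' OB IA OA' IB OB') :
    rrA (c • U) = c • rrA U := by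
  simp only [rrA, rrOA'_smul, rrOA_smul, rrIA_smul, rrIA'_smul]

lemma rrB_add (U V : WTen IA' OA IB' OB IA OA' IB OB') :
    rrB (U + V) = rrB U + rrB V := by
  simp only [rrB, rrOB'_add, rrOB_add_s9, rrIB_add_s9, rrIB'_add]

lemma rrB_sub (U V : WTen IA' OA IB' OB IA OA' IB OB') :
    rrB (U - V) = rrB U - rrB V := by
  simp only [rrB, rrOB'_sub, rrOB_sub_s9, rrIB_sub_s9, rrIB'_sub]

lemma rrB_smul (c : ℝ) (U : WTen IA' OA IB' OB IA OA' IB OB') :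
    rrB (c • U) = c • rrB U := by
  simp only [rrB, rrOB'_smul, rrOB_smul, rrIB_smul, rrIB'_smul]

/-! `rrA`/`rrB` versus `rrOA'`/`rrOB'`. -/

lemma rrA_rrOA' (X : WTen IA' OA IB' OB IA OA' IB OB') : rrA (rrOA' X) = rrA X := by
  simp only [rrA, idem_OA']

lemma rrA_rrOB' (X : WTen IA' OA IB' OB IA OA' IB OB') : rrA (rrOB' X) = rrOB' (rrA X) := by
  simp only [rrA, comm_OA'_OB', comm_OA_OB'_s9, comm_IA_OB'_s9, comm_IA'_OB']

lemma rrB_rrOB' (X : WTen IA' OA IB' OB IA OA' IB OB') : rrB (rrOB' X) = rrB X := by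
  simp only [rrB, idem_OB']

lemma rrB_rrOA' (X : WTen IA' OA IB' OB IA OA' IB OB') : rrB (rrOA' X) = rrOA' (rrB X) := by
  simp only [rrB, ← comm_OA'_OB', comm_OB_OA'_s9, comm_IB_OA'_s9, comm_IB'_OA']

/-! Total reduction. -/

lemma tot_add (U V : WTen IA' OA IB' OB IA OA' IB OB') : tot (U + V) = tot U + tot V := by
  simp only [tot, wadd_apply, Finset.sum_add_distrib]

lemma tot_sub (U V : WTen IA' OA IB' OB IA OA' IB OB') : tot (U - V) = tot U - tot V := by
  simp only [tot, wsub_apply, Finset.sum_sub_distrib]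

lemma tot_smul (c : ℝ) (U : WTen IA' OA IB' OB IA OA' IB OB') : tot (c • U) = c * tot U := by
  simp only [tot, wsmul_apply, ← Finset.mul_sum]

lemma tot_rrOB' (W : WTen IA' OA IB' OB IA OA' IB OB') :
    tot (rrOB' W) = tot W := by
  have hc : (Fintype.card OB' : ℝ) ≠ 0 := Nat.cast_ne_zero.mpr Fintype.card_ne_zero
  unfold tot rrOB'
  refine Finset.sum_congr rfl fun ia' _ => Finset.sum_congr rfl fun oa _ =>
    Finset.sum_congr rfl fun ib' _ => Finset.sum_congr rfl fun ob _ =>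
    Finset.sum_congr rfl fun ia _ => Finset.sum_congr rfl fun oa' _ =>
    Finset.sum_congr rfl fun ib _ => ?_
  rw [Finset.sum_const, Finset.card_univ, nsmul_eq_mul, mul_div_cancel₀ _ hc]

lemma tot_rrOA' (W : WTen IA' OA IB' OB IA OA' IB OB') :
    tot (rrOA' W) = tot W := by
  have hc : (Fintype.card OA' : ℝ) ≠ 0 := Nat.cast_ne_zero.mpr Fintype.card_ne_zero
  unfold tot rrOA'
  refine Finset.sum_congr rfl fun ia' _ => Finset.sum_congr rfl fun oa _ =>
    Finset.sum_congr rfl fun ib' _ => Finset.sum_congr rfl fun ob _ =>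
    Finset.sum_congr rfl fun ia _ => ?_
  conv_lhs => rw [sum3_swap]
  conv_rhs => rw [sum3_swap]
  refine Finset.sum_congr rfl fun ib _ => Finset.sum_congr rfl fun ob' _ => ?_
  rw [Finset.sum_const, Finset.card_univ, nsmul_eq_mul, mul_div_cancel₀ _ hc]

/-! Nonnegativity. -/

lemma nonneg_rrOA' (W : WTen IA' OA IB' OB IA OA' IB OB') (h : Nonneg8 W) :
    Nonneg8 (rrOA' W) := by
  intro x1 x2 x3 x4 x5 x6 x7 x8
  exact div_nonneg (Finset.sum_nonneg fun j _ => h _ _ _ _ _ _ _ _) (Nat.cast_nonneg _)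

lemma nonneg_rrOB' (W : WTen IA' OA IB' OB IA OA' IB OB') (h : Nonneg8 W) :
    Nonneg8 (rrOB' W) := by
  intro x1 x2 x3 x4 x5 x6 x7 x8
  exact div_nonneg (Finset.sum_nonneg fun j _ => h _ _ _ _ _ _ _ _) (Nat.cast_nonneg _)

/-! The key inequality. -/

lemma key_ineq (W : WTen IA' OA IB' OB IA OA' IB OB') (hpos : Nonneg8 W) :
    ∀ ia' oa ib' ob ia oa' ib ob',
      rrOA' W ia' oa ib' ob ia oa' ib ob' ≤
        (Fintype.card OB' : ℝ) * rrOA' (rrOB' W) ia' oa ib' ob ia oa' ib ob' := by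
  intro ia' oa ib' ob ia oa' ib ob'
  have hcB : (0:ℝ) < (Fintype.card OB' : ℝ) := by exact_mod_cast Fintype.card_pos
  have hcA : (0:ℝ) < (Fintype.card OA' : ℝ) := by exact_mod_cast Fintype.card_pos
  have hrw : (Fintype.card OB' : ℝ) * rrOA' (rrOB' W) ia' oa ib' ob ia oa' ib ob'
      = (∑ j, ∑ k, W ia' oa ib' ob ia j ib k) / (Fintype.card OA' : ℝ) := by
    simp only [rrOA', rrOB', ← Finset.sum_div, div_div]
    field_simp
  rw [hrw]
  simp only [rrOA']
  gcongr with j _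
  exact Finset.single_le_sum (fun k _ => hpos ia' oa ib' ob ia j ib k) (Finset.mem_univ ob')

end Lemmas

theorem statement_9
    {IA' OA IB' OB IA OA' IB OB' : Type}
    [Fintype IA'] [Fintype OA] [Fintype IB'] [Fintype OB]
    [Fintype IA] [Fintype OA'] [Fintype IB] [Fintype OB']
    [Nonempty IA'] [Nonempty OA] [Nonempty IB'] [Nonempty OB]
    [Nonempty IA] [Nonempty OA'] [Nonempty IB] [Nonempty OB']
    (W : WTen IA' OA IB' OB IA OA' IB OB') (hW : IsBoxworldProcess W)
    (hd : 2 ≤ Fintype.card OB')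
    (W1 W2 : WTen IA' OA IB' OB IA OA' IB OB')
    (hW1 : W1 = ((Fintype.card OB' : ℝ))⁻¹ •
      (((Fintype.card OB' : ℝ) - 1) • rrOA' (rrOB' W) + rrOB' W))
    (hW2 : W2 = ((Fintype.card OB' : ℝ) - 1)⁻¹ •
      ((Fintype.card OB' : ℝ) • rrOA' (rrOB' W) - rrOA' W)) :
    (IsBoxworldProcess W1 ∧ W1 = rrOB' W1) ∧
    (IsBoxworldProcess W2 ∧ W2 = rrOA' W2) ∧
    W = (Fintype.card OB' : ℝ) • W1 + (1 - (Fintype.card OB' : ℝ)) • W2 := by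
  obtain ⟨hpos, htot, hA, hB, hproc, hNSA, hNSB⟩ := hW
  have hd2 : (2:ℝ) ≤ (Fintype.card OB' : ℝ) := by exact_mod_cast hd
  have hd0 : (Fintype.card OB' : ℝ) ≠ 0 := by linarith
  have hdm1 : (0:ℝ) < (Fintype.card OB' : ℝ) - 1 := by linarith
  have hdm0 : (Fintype.card OB' : ℝ) - 1 ≠ 0 := ne_of_gt hdm1
  subst hW1
  subst hW2
  have combine1 : ∀ Q : WTen IA' OA IB' OB IA OA' IB OB',
      ((Fintype.card OB' : ℝ))⁻¹ • (((Fintype.card OB' : ℝ) - 1) • Q + Q) = Q := by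
    intro Q
    funext x1 x2 x3 x4 x5 x6 x7 x8
    simp only [wsmul_apply, wadd_apply]
    field_simp
    ring
  have combine2 : ∀ Q : WTen IA' OA IB' OB IA OA' IB OB',
      ((Fintype.card OB' : ℝ) - 1)⁻¹ • ((Fintype.card OB' : ℝ) • Q - Q) = Q := by
    intro Q
    funext x1 x2 x3 x4 x5 x6 x7 x8
    simp only [wsmul_apply, wsub_apply]
    field_simp
  have hPA' : rrOA' (rrOA' (rrOB' W)) = rrOA' (rrOB' W) := idem_OA' _
  have hPB' : rrOB' (rrOA' (rrOB' W)) = rrOA' (rrOB' W) := by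
    rw [← comm_OA'_OB', idem_OB']
  -- basic reductions of W1 and W2
  have eA1 : rrOA' (((Fintype.card OB' : ℝ))⁻¹ •
      (((Fintype.card OB' : ℝ) - 1) • rrOA' (rrOB' W) + rrOB' W)) = rrOA' (rrOB' W) := by
    simp only [rrOA'_smul, rrOA'_add, hPA']
    exact combine1 _
  have eB1 : rrOB' (((Fintype.card OB' : ℝ))⁻¹ •
      (((Fintype.card OB' : ℝ) - 1) • rrOA' (rrOB' W) + rrOB' W)) =
      ((Fintype.card OB' : ℝ))⁻¹ •
      (((Fintype.card OB' : ℝ) - 1) • rrOA' (rrOB' W) + rrOB' W) := by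
    simp only [rrOB'_smul, rrOB'_add, hPB', idem_OB']
  have eA2 : rrOA' (((Fintype.card OB' : ℝ) - 1)⁻¹ •
      ((Fintype.card OB' : ℝ) • rrOA' (rrOB' W) - rrOA' W)) =
      ((Fintype.card OB' : ℝ) - 1)⁻¹ •
      ((Fintype.card OB' : ℝ) • rrOA' (rrOB' W) - rrOA' W) := by
    simp only [rrOA'_smul, rrOA'_sub, hPA', idem_OA']
  have eB2 : rrOB' (((Fintype.card OB' : ℝ) - 1)⁻¹ •
      ((Fintype.card OB' : ℝ) • rrOA' (rrOB' W) - rrOA' W)) = rrOA' (rrOB' W) := by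
    simp only [rrOB'_smul, rrOB'_sub, hPB', ← comm_OA'_OB']
    exact combine2 _
  -- rrA reductions
  have hAP : rrA (rrOA' (rrOB' W)) = rrA W := by rw [rrA_rrOA', rrA_rrOB', ← hA]
  have hAB'W : rrA (rrOB' W) = rrA W := by rw [rrA_rrOB', ← hA]
  have eAW1 : rrA (((Fintype.card OB' : ℝ))⁻¹ •
      (((Fintype.card OB' : ℝ) - 1) • rrOA' (rrOB' W) + rrOB' W)) = rrA W := by
    simp only [rrA_smul, rrA_add, hAP, hAB'W]
    exact combine1 _
  have eAW2 : rrA (((Fintype.card OB' : ℝ) - 1)⁻¹ •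
      ((Fintype.card OB' : ℝ) • rrOA' (rrOB' W) - rrOA' W)) = rrA W := by
    simp only [rrA_smul, rrA_sub, hAP, rrA_rrOA']
    exact combine2 _
  -- rrB reductions
  have hBP : rrB (rrOA' (rrOB' W)) = rrB W := by rw [rrB_rrOA', rrB_rrOB', ← hB]
  have eBW1 : rrB (((Fintype.card OB' : ℝ))⁻¹ •
      (((Fintype.card OB' : ℝ) - 1) • rrOA' (rrOB' W) + rrOB' W)) = rrB W := by
    simp only [rrB_smul, rrB_add, hBP, rrB_rrOB']
    exact combine1 _
  have eBW2 : rrB (((Fintype.card OB' : ℝ) - 1)⁻¹ •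
      ((Fintype.card OB' : ℝ) • rrOA' (rrOB' W) - rrOA' W)) = rrB W := by
    simp only [rrB_smul, rrB_sub, hBP, rrB_rrOA', ← hB]
    exact combine2 _
  refine ⟨⟨⟨?_, ?_, ?_, ?_, ?_, ?_, ?_⟩, eB1.symm⟩, ⟨⟨?_, ?_, ?_, ?_, ?_, ?_, ?_⟩, eA2.symm⟩, ?_⟩
  -- W1 : nonnegativity
  · intro x1 x2 x3 x4 x5 x6 x7 x8
    simp only [wsmul_apply, wadd_apply]
    have h1 : 0 ≤ rrOA' (rrOB' W) x1 x2 x3 x4 x5 x6 x7 x8 :=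
      nonneg_rrOA' _ (nonneg_rrOB' _ hpos) _ _ _ _ _ _ _ _
    have h2 : 0 ≤ rrOB' W x1 x2 x3 x4 x5 x6 x7 x8 := nonneg_rrOB' _ hpos _ _ _ _ _ _ _ _
    have h3 : (0:ℝ) ≤ (Fintype.card OB' : ℝ) - 1 := hdm1.le
    have h4 : (0:ℝ) ≤ ((Fintype.card OB' : ℝ))⁻¹ := inv_nonneg.mpr (by linarith)
    exact mul_nonneg h4 (add_nonneg (mul_nonneg h3 h1) h2)
  -- W1 : total reduction
  · simp only [tot_smul, tot_add, tot_rrOA', tot_rrOB', htot]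
    field_simp
    ring
  -- W1 : rrA condition
  · rw [eAW1]; exact hA
  -- W1 : rrB condition
  · rw [eBW1]; exact hB
  -- W1 : process decomposition
  · rw [eB1, eA1]
    abel
  -- W1 : NS condition A
  · have h6 : rrOA (((Fintype.card OB' : ℝ))⁻¹ •
        (((Fintype.card OB' : ℝ) - 1) • rrOA' (rrOB' W) + rrOB' W)) =
        ((Fintype.card OB' : ℝ))⁻¹ •
        (((Fintype.card OB' : ℝ) - 1) • rrOA' (rrOB' (rrOA W)) + rrOB' (rrOA W)) := by
      simp only [rrOA_smul, rrOA_add_s9, comm_OA_OA'_s9, comm_OA_OB'_s9]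
    rw [h6]
    simp only [rrIA_smul, rrIA_add_s9, comm_IA_OA'_s9, comm_IA_OB'_s9, ← hNSA]
  -- W1 : NS condition B
  · have h7 : rrOB (((Fintype.card OB' : ℝ))⁻¹ •
        (((Fintype.card OB' : ℝ) - 1) • rrOA' (rrOB' W) + rrOB' W)) =
        ((Fintype.card OB' : ℝ))⁻¹ •
        (((Fintype.card OB' : ℝ) - 1) • rrOA' (rrOB' (rrOB W)) + rrOB' (rrOB W)) := by
      simp only [rrOB_smul, rrOB_add_s9, comm_OB_OA'_s9, comm_OB_OB'_s9]
    rw [h7]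
    simp only [rrIB_smul, rrIB_add_s9, comm_IB_OA'_s9, comm_IB_OB'_s9, ← hNSB]
  -- W2 : nonnegativity
  · intro x1 x2 x3 x4 x5 x6 x7 x8
    simp only [wsmul_apply, wsub_apply]
    have h4 : (0:ℝ) ≤ ((Fintype.card OB' : ℝ) - 1)⁻¹ := inv_nonneg.mpr hdm1.le
    exact mul_nonneg h4 (sub_nonneg.mpr (key_ineq W hpos x1 x2 x3 x4 x5 x6 x7 x8))
  -- W2 : total reduction
  · simp only [tot_smul, tot_sub, tot_rrOA', tot_rrOB', htot]
    field_simp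
  -- W2 : rrA condition
  · rw [eAW2]; exact hA
  -- W2 : rrB condition
  · rw [eBW2]; exact hB
  -- W2 : process decomposition
  · rw [eB2, eA2, hPA']
    abel
  -- W2 : NS condition A
  · have h6 : rrOA (((Fintype.card OB' : ℝ) - 1)⁻¹ •
        ((Fintype.card OB' : ℝ) • rrOA' (rrOB' W) - rrOA' W)) =
        ((Fintype.card OB' : ℝ) - 1)⁻¹ •
        ((Fintype.card OB' : ℝ) • rrOA' (rrOB' (rrOA W)) - rrOA' (rrOA W)) := by
      simp only [rrOA_smul, rrOA_sub_s9, comm_OA_OA'_s9, comm_OA_OB'_s9]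
    rw [h6]
    simp only [rrIA_smul, rrIA_sub_s9, comm_IA_OA'_s9, comm_IA_OB'_s9, ← hNSA]
  -- W2 : NS condition B
  · have h7 : rrOB (((Fintype.card OB' : ℝ) - 1)⁻¹ •
        ((Fintype.card OB' : ℝ) • rrOA' (rrOB' W) - rrOA' W)) =
        ((Fintype.card OB' : ℝ) - 1)⁻¹ •
        ((Fintype.card OB' : ℝ) • rrOA' (rrOB' (rrOB W)) - rrOA' (rrOB W)) := by
      simp only [rrOB_smul, rrOB_sub_s9, comm_OB_OA'_s9, comm_OB_OB'_s9]
    rw [h7]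
    simp only [rrIB_smul, rrIB_sub_s9, comm_IB_OA'_s9, comm_IB_OB'_s9, ← hNSB]
  -- decomposition of W
  · conv_lhs => rw [hproc]
    funext x1 x2 x3 x4 x5 x6 x7 x8
    simp only [wadd_apply, wsub_apply, wsmul_apply]
    field_simp
    ring

end Boxworld

end
end
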